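/- arXiv:2605.11881 — 3 statements merged into one kernel-verified Lean document; each statement's English description precedes it below -/
import Mathlib

section
/- Let V be a real vector space and let S_1, …, S_K be independent submodules of V. Let z_1, …, z_n ∈ V with labels y_1, …, y_n ∈ {1, …, K} such that z_j ∈ S_{y_j} for every j. Fix an index i and consider the feasible set F = {a ∈ ℝ^n : z_i = Σ_{j=1}^n a_j z_j and a_i = 0}. If a* ∈ F minimizes the ℓ0 norm ‖a‖₀ over F (i.e., ‖a*‖₀ ≤ ‖a‖₀ for every a ∈ F), then a* is subspace-preserving for index i: a*_j ≠ 0 implies y_j = y_i. -/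
open Classical in
/-- Subspace-preserving property of the ℓ0-norm solution: any minimizer of the
ℓ0 norm over the feasible set `{a : z i = ∑ j, a j • z j ∧ a i = 0}` is
subspace-preserving for index `i`. -/
theorem l0_minimizer_subspace_preserving
    {V : Type*} [AddCommGroup V] [Module ℝ V]
    {K n : ℕ} (S : Fin K → Submodule ℝ V) (hS : iSupIndep S)
    (z : Fin n → V) (y : Fin n → Fin K) (hz : ∀ j, z j ∈ S (y j))
    (i : Fin n) (aStar : Fin n → ℝ)
    (hFeas : z i = (∑ j, aStar j • z j) ∧ aStar i = 0)
    (hMin : ∀ a : Fin n → ℝ,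
      (z i = (∑ j, a j • z j) ∧ a i = 0) →
        (Finset.univ.filter (fun j => aStar j ≠ 0)).card ≤
          (Finset.univ.filter (fun j => a j ≠ 0)).card) :
    ∀ j, aStar j ≠ 0 → y j = y i := by
  intro j0 hj0
  by_contra hne
  set a' : Fin n → ℝ := fun j => if y j = y i then aStar j else 0 with ha'
  have hterm : ∀ j, a' j • z j ∈ S (y i) := by
    intro j
    by_cases h : y j = y i
    · simp only [ha', if_pos h]
      exact h ▸ Submodule.smul_mem _ _ (hz j)
    · simp [ha', if_neg h]
  have hsum_mem : (∑ j, a' j • z j) ∈ S (y i) :=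
    Submodule.sum_mem _ fun j _ => hterm j
  have hdiff_mem : z i - ∑ j, a' j • z j ∈ S (y i) :=
    Submodule.sub_mem _ (hz i) hsum_mem
  have hdiff_eq : z i - ∑ j, a' j • z j
      = ∑ j, (if y j = y i then 0 else aStar j) • z j := by
    rw [hFeas.1, ← Finset.sum_sub_distrib]
    apply Finset.sum_congr rfl
    intro j _
    by_cases h : y j = y i <;> simp [ha', h]
  have hdiff_mem2 : z i - ∑ j, a' j • z j ∈ ⨆ (k) (_ : k ≠ y i), S k := by
    rw [hdiff_eq]
    apply Submodule.sum_mem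
    intro j _
    by_cases h : y j = y i
    · simp [h]
    · exact Submodule.smul_mem _ _
        (Submodule.mem_iSup_of_mem (y j) (Submodule.mem_iSup_of_mem h (hz j)))
  have hzero : z i - ∑ j, a' j • z j = 0 :=
    (Submodule.disjoint_def.mp (hS (y i))) _ hdiff_mem hdiff_mem2
  have hfeas' : z i = ∑ j, a' j • z j := sub_eq_zero.mp hzero
  have ha'i : a' i = 0 := by simp [ha', hFeas.2]
  have hle := hMin a' ⟨hfeas', ha'i⟩
  have hss : (Finset.univ.filter (fun j => a' j ≠ 0)) ⊂
      (Finset.univ.filter (fun j => aStar j ≠ 0)) := by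
    constructor
    · intro j hj
      simp only [Finset.mem_filter, Finset.mem_univ, true_and] at hj ⊢
      intro h
      exact hj (by simp [ha', h])
    · intro hsub
      have := hsub (by simp [hj0] : j0 ∈ Finset.univ.filter (fun j => aStar j ≠ 0))
      simp only [Finset.mem_filter, Finset.mem_univ, true_and, ha'] at this
      exact this (by simp [hne])
  exact absurd hle (not_le.mpr (Finset.card_lt_card hss))
end

section
/- Let α > 1 and let s ∈ ℝ^n with n ≥ 1. Then there exists a unique τ ∈ ℝ such that Σ_{j=1}^n (max((α−1)(s_j − τ), 0))^{1/(α−1)} = 1, and this τ satisfies τ < max_j s_j. -/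
/-- Existence and uniqueness of the entmax threshold: for `α > 1` and
`s ∈ ℝⁿ` with `n ≥ 1`, there is a unique `τ` with
`∑ j, (max ((α−1)(s j − τ)) 0)^(1/(α−1)) = 1`, and it satisfies
`τ < max_j s j`. -/
theorem entmax_threshold_exists_unique
    {n : ℕ} (hn : 0 < n) (α : ℝ) (hα : 1 < α) (s : Fin n → ℝ) :
    ∃ τ : ℝ,
      ((∑ j, (max ((α - 1) * (s j - τ)) 0) ^ ((1 : ℝ) / (α - 1)) = 1) ∧
        τ < Finset.univ.sup' (Finset.univ_nonempty_iff.mpr ⟨⟨0, hn⟩⟩) s) ∧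
      ∀ τ' : ℝ,
        (∑ j, (max ((α - 1) * (s j - τ')) 0) ^ ((1 : ℝ) / (α - 1)) = 1) →
          τ' = τ := by
  have hne : (Finset.univ : Finset (Fin n)).Nonempty :=
    Finset.univ_nonempty_iff.mpr ⟨⟨0, hn⟩⟩
  set M : ℝ := Finset.univ.sup' hne s with hMdef
  have hα1 : (0:ℝ) < α - 1 := by linarith
  set c : ℝ := 1 / (α - 1) with hcdef
  have hc : 0 < c := by positivity
  set g : ℝ → ℝ := fun τ => ∑ j, (max ((α - 1) * (s j - τ)) 0) ^ c with hg
  -- continuity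
  have hgc : Continuous g := by
    apply continuous_finset_sum
    intro j _
    have h1 : Continuous fun τ : ℝ => max ((α - 1) * (s j - τ)) 0 := by
      continuity
    exact h1.rpow_const (fun x => Or.inr hc.le)
  -- g vanishes at and above M
  have hzero : ∀ τ : ℝ, M ≤ τ → g τ = 0 := by
    intro τ hτ
    apply Finset.sum_eq_zero
    intro j _
    have hsj : s j ≤ M := Finset.le_sup' s (Finset.mem_univ j)
    have hmax : max ((α - 1) * (s j - τ)) 0 = 0 :=
      max_eq_right (by nlinarith)
    rw [hmax, Real.zero_rpow hc.ne']
  -- termwise antitone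
  have hmono : ∀ (j : Fin n) (τ1 τ2 : ℝ), τ1 ≤ τ2 →
      (max ((α - 1) * (s j - τ2)) 0) ^ c ≤ (max ((α - 1) * (s j - τ1)) 0) ^ c := by
    intro j τ1 τ2 h
    exact Real.rpow_le_rpow (le_max_right _ _)
      (max_le_max (by nlinarith) le_rfl) hc.le
  obtain ⟨j0, -, hj0⟩ := Finset.exists_mem_eq_sup' hne s
  -- strict antitonicity below M
  have hanti : ∀ τ1 τ2 : ℝ, τ1 < τ2 → τ2 < M → g τ2 < g τ1 := by
    intro τ1 τ2 h12 h2M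
    apply Finset.sum_lt_sum (fun j _ => hmono j τ1 τ2 h12.le)
    refine ⟨j0, Finset.mem_univ _, ?_⟩
    have hpos2 : 0 < (α - 1) * (s j0 - τ2) := by
      have : τ2 < s j0 := by rw [← hj0]; exact h2M
      nlinarith
    have hlt : (α - 1) * (s j0 - τ2) < (α - 1) * (s j0 - τ1) := by nlinarith
    rw [max_eq_left hpos2.le, max_eq_left (by linarith)]
    exact Real.rpow_lt_rpow hpos2.le hlt hc
  -- value at M - c is at least 1
  have hg0 : 1 ≤ g (M - c) := by
    have hterm : (max ((α - 1) * (s j0 - (M - c))) 0) ^ c = 1 := by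
      have h1 : (α - 1) * (s j0 - (M - c)) = 1 := by
        rw [← hj0, hcdef]
        field_simp
        linear_combination -(α - 1) * hMdef
      rw [h1, max_eq_left zero_le_one, Real.one_rpow]
    calc (1:ℝ) = (max ((α - 1) * (s j0 - (M - c))) 0) ^ c := hterm.symm
      _ ≤ g (M - c) := Finset.single_le_sum (f := fun j => (max ((α - 1) * (s j - (M - c))) 0) ^ c)
          (fun j _ => Real.rpow_nonneg (le_max_right _ _) c) (Finset.mem_univ j0)
  -- IVT
  have hsub : M - c ≤ M := by linarith
  have hmem : (1:ℝ) ∈ Set.Icc (g M) (g (M - c)) := by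
    rw [hzero M le_rfl]; exact ⟨zero_le_one, hg0⟩
  obtain ⟨τ, hτmem, hτeq⟩ :=
    intermediate_value_Icc' hsub hgc.continuousOn hmem
  have hτM : τ < M := by
    rcases lt_or_eq_of_le hτmem.2 with h | h
    · exact h
    · exfalso; rw [h, hzero M le_rfl] at hτeq; norm_num at hτeq
  have hlt : ∀ τ' : ℝ, g τ' = 1 → τ' < M := by
    intro τ' hτ'
    by_contra h
    rw [hzero τ' (not_lt.mp h)] at hτ'
    norm_num at hτ'
  refine ⟨τ, ⟨hτeq, hτM⟩, ?_⟩
  intro τ' hτ'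
  have hτ'g : g τ' = 1 := hτ'
  have hτ'M : τ' < M := hlt τ' hτ'g
  rcases lt_trichotomy τ' τ with h | h | h
  · have := hanti τ' τ h hτM
    rw [hτeq, hτ'g] at this; norm_num at this
  · exact h
  · have := hanti τ τ' h hτ'M
    rw [hτeq, hτ'g] at this; norm_num at this
end

section
/- Let α > 1 and s ∈ ℝ^n with n ≥ 1, and let τ ∈ ℝ be the unique real number such that Σ_{j=1}^n (max((α−1)(s_j − τ), 0))^{1/(α−1)} = 1. Define a* ∈ ℝ^n by a*_j = (max((α−1)(s_j − τ), 0))^{1/(α−1)}. Then a* lies in the standard probability simplex Δ and a* is the unique maximizer over Δ of the entmax objective f(a) = Σ_{j=1}^n a_j s_j + (1/(α(α−1))) Σ_{j=1}^n (a_j − a_j^α); that is, the α-entmax transformation of s equals the threshold vector a*. -/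
/-- Pointwise strict inequality: the function `x ↦ x*c - x^α/(α(α-1))` on `[0,∞)`
is strictly maximized at `a = (max ((α-1)c) 0)^(1/(α-1))`. -/
lemma entmax_pointwise_lt (α : ℝ) (hα : 1 < α) (c x a : ℝ) (hx : 0 ≤ x)
    (ha : a = (max ((α - 1) * c) 0) ^ ((1 : ℝ) / (α - 1))) (hne : x ≠ a) :
    x * c - 1 / (α * (α - 1)) * x ^ α < a * c - 1 / (α * (α - 1)) * a ^ α := by
  have hα1 : 0 < α - 1 := sub_pos.mpr hα
  have hα0 : 0 < α := by linarith
  have hk : 0 < α * (α - 1) := mul_pos hα0 hα1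
  have hkpos : 0 < 1 / (α * (α - 1)) := by positivity
  rcases le_or_gt ((α - 1) * c) 0 with h | h
  · -- threshold inactive: a = 0
    have ha0 : a = 0 := by
      rw [ha, max_eq_right h, Real.zero_rpow (by positivity)]
    subst ha0
    have hxpos : 0 < x := lt_of_le_of_ne hx (Ne.symm hne)
    have hc : c ≤ 0 := by nlinarith
    have hxα : 0 < x ^ α := Real.rpow_pos_of_pos hxpos α
    have h0α : (0 : ℝ) ^ α = 0 := Real.zero_rpow (ne_of_gt hα0)
    rw [h0α]
    nlinarith [mul_pos hkpos hxα, mul_nonpos_of_nonneg_of_nonpos hx hc]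
  · -- threshold active
    have hc : 0 < c := by nlinarith
    have hmax : max ((α - 1) * c) 0 = (α - 1) * c := max_eq_left h.le
    rw [hmax] at ha
    have hapos : 0 < a := ha ▸ Real.rpow_pos_of_pos h _
    have hA : a ^ (α - 1) = (α - 1) * c := by
      rw [ha, ← Real.rpow_mul h.le, one_div_mul_cancel (ne_of_gt hα1), Real.rpow_one]
    have haα : a ^ α = (α - 1) * c * a := by
      have : a ^ α = a ^ (α - 1) * a ^ (1 : ℝ) := by
        rw [← Real.rpow_add hapos]; ring_nf
      rw [this, hA, Real.rpow_one]
    set t : ℝ := x / a - 1 with ht_def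
    have ht : -1 ≤ t := by
      have : 0 ≤ x / a := div_nonneg hx hapos.le
      simp [ht_def]; linarith
    have htne : t ≠ 0 := by
      intro h0
      apply hne
      have : x / a = 1 := by linarith [h0 ▸ ht_def]
      field_simp at this
      linarith
    have hb := one_add_mul_self_lt_rpow_one_add ht htne hα
    have h1t : 1 + t = x / a := by ring
    have hxα : (1 + t) ^ α * a ^ α = x ^ α := by
      rw [h1t, ← Real.mul_rpow (div_nonneg hx hapos.le) hapos.le,
        div_mul_cancel₀ _ (ne_of_gt hapos)]
    have haαpos : 0 < a ^ α := Real.rpow_pos_of_pos hapos α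
    have hxgt : (1 + α * t) * a ^ α < x ^ α := by
      rw [← hxα]
      exact mul_lt_mul_of_pos_right hb haαpos
    have hta : t * a = x - a := by
      rw [ht_def, sub_mul, div_mul_cancel₀ _ (ne_of_gt hapos), one_mul]
    have hexp : (1 + α * t) * a ^ α = (α - 1) * c * a + α * ((α - 1) * c) * (x - a) := by
      rw [haα, ← hta]; ring
    rw [hexp] at hxgt
    have key : 1 / (α * (α - 1)) * (α * ((α - 1) * c) * (x - a)) = c * (x - a) := by
      field_simp
    nlinarith [mul_lt_mul_of_pos_left hxgt hkpos, key]

lemma entmax_pointwise_le (α : ℝ) (hα : 1 < α) (c x a : ℝ) (hx : 0 ≤ x)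
    (ha : a = (max ((α - 1) * c) 0) ^ ((1 : ℝ) / (α - 1))) :
    x * c - 1 / (α * (α - 1)) * x ^ α ≤ a * c - 1 / (α * (α - 1)) * a ^ α := by
  rcases eq_or_ne x a with h | h
  · rw [h]
  · exact (entmax_pointwise_lt α hα c x a hx ha h).le

/-- The α-entmax transformation equals the threshold vector: if `τ` satisfies
`∑ j, (max ((α−1)(s j − τ)) 0)^(1/(α−1)) = 1` and
`a* j = (max ((α−1)(s j − τ)) 0)^(1/(α−1))`, then `a*` lies in the standard
probability simplex and is the unique maximizer of the entmax objective
over the simplex. -/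
theorem entmax_equals_threshold_vector
    {n : ℕ} (hn : 0 < n) (α : ℝ) (hα : 1 < α) (s : Fin n → ℝ) (τ : ℝ)
    (hτ : ∑ j, (max ((α - 1) * (s j - τ)) 0) ^ ((1 : ℝ) / (α - 1)) = 1)
    (aStar : Fin n → ℝ)
    (haStar : ∀ j,
      aStar j = (max ((α - 1) * (s j - τ)) 0) ^ ((1 : ℝ) / (α - 1))) :
    ((∀ j, 0 ≤ aStar j) ∧ ∑ j, aStar j = 1) ∧
    (∀ b : Fin n → ℝ, ((∀ j, 0 ≤ b j) ∧ ∑ j, b j = 1) →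
      (∑ j, b j * s j) + (1 / (α * (α - 1))) * ∑ j, (b j - (b j) ^ α) ≤
      (∑ j, aStar j * s j) +
        (1 / (α * (α - 1))) * ∑ j, (aStar j - (aStar j) ^ α)) ∧
    ∀ a' : Fin n → ℝ,
      (((∀ j, 0 ≤ a' j) ∧ ∑ j, a' j = 1) ∧
        ∀ b : Fin n → ℝ, ((∀ j, 0 ≤ b j) ∧ ∑ j, b j = 1) →
          (∑ j, b j * s j) + (1 / (α * (α - 1))) * ∑ j, (b j - (b j) ^ α) ≤
          (∑ j, a' j * s j) +
            (1 / (α * (α - 1))) * ∑ j, (a' j - (a' j) ^ α)) →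
        a' = aStar := by
  have hnn : ∀ j, 0 ≤ aStar j := fun j =>
    (haStar j) ▸ Real.rpow_nonneg (le_max_right _ _) _
  have hsum : ∑ j, aStar j = 1 := by
    simp_rw [haStar]; exact hτ
  -- decomposition of the objective
  have hdecomp : ∀ b : Fin n → ℝ,
      (∑ j, b j * s j) + (1 / (α * (α - 1))) * ∑ j, (b j - (b j) ^ α) =
      (∑ j, (b j * (s j - τ) - 1 / (α * (α - 1)) * (b j) ^ α)) +
        (τ + 1 / (α * (α - 1))) * ∑ j, b j := by
    intro b
    rw [Finset.mul_sum, Finset.mul_sum, ← Finset.sum_add_distrib, ← Finset.sum_add_distrib]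
    exact Finset.sum_congr rfl fun j _ => by ring
  have hle : ∀ j (x : ℝ), 0 ≤ x →
      x * (s j - τ) - 1 / (α * (α - 1)) * x ^ α ≤
      aStar j * (s j - τ) - 1 / (α * (α - 1)) * (aStar j) ^ α :=
    fun j x hx => entmax_pointwise_le α hα (s j - τ) x (aStar j) hx (haStar j)
  refine ⟨⟨hnn, hsum⟩, ?_, ?_⟩
  · rintro b ⟨hb0, hb1⟩
    rw [hdecomp b, hdecomp aStar, hb1, hsum]
    exact add_le_add_left (Finset.sum_le_sum fun j _ => hle j (b j) (hb0 j)) _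
  · rintro a' ⟨⟨h0, h1⟩, hmax⟩
    funext j
    by_contra hne
    have hlt : (∑ i, (a' i * (s i - τ) - 1 / (α * (α - 1)) * (a' i) ^ α)) <
        (∑ i, (aStar i * (s i - τ) - 1 / (α * (α - 1)) * (aStar i) ^ α)) := by
      refine Finset.sum_lt_sum (fun i _ => hle i (a' i) (h0 i))
        ⟨j, Finset.mem_univ j, ?_⟩
      exact entmax_pointwise_lt α hα (s j - τ) (a' j) (aStar j) (h0 j) (haStar j) hne
    have h2 : (∑ i, a' i * s i) + (1 / (α * (α - 1))) * ∑ i, (a' i - (a' i) ^ α) <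
        (∑ i, aStar i * s i) + (1 / (α * (α - 1))) * ∑ i, (aStar i - (aStar i) ^ α) := by
      rw [hdecomp a', hdecomp aStar, h1, hsum]
      linarith
    have h3 := hmax aStar ⟨hnn, hsum⟩
    linarith
end
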